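/- (Descent Lemma) Under the lower-bound, mixing, smoothness, and bounded-variance assumptions, if the step size satisfies η ≤ (1−β)/(4L), then for every round r ≥ 0 the Momentum Tracking iterates satisfy E f(z̄^{(r+1)}) ≤ E f(z̄^{(r)}) + (L²η/(1−β)) E‖x̄^{(r)} − z̄^{(r)}‖² + (L²η/(1−β)) Ξ^{(r)} − (η/(4(1−β))) E‖(1/N)∑_{i=1}^N ∇f_i(x_i^{(r)})‖² − (η/(4(1−β))) E‖∇f(x̄^{(r)})‖² + Lσ²η²/(2N(1−β)²). -/

import Mathlib

/-!
Write `γ = η/(1-β)`, `Ḡ⁽ʳ⁾ = (1/N) ∑ᵢ ∇Fᵢ(xᵢ⁽ʳ⁾; ξᵢ⁽ʳ⁾)` and `h̄⁽ʳ⁾ = (1/N) ∑ᵢ ∇fᵢ(xᵢ⁽ʳ⁾)`.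
Because `W` is doubly stochastic and `ū⁽⁰⁾ = 0`, the correction variables average to zero, so
`x̄⁽ʳ⁺¹⁾ = x̄⁽ʳ⁾ - η ū⁽ʳ⁺¹⁾` and `ū⁽ʳ⁺¹⁾ = β ū⁽ʳ⁾ + Ḡ⁽ʳ⁾`: the auxiliary average takes plain SGD
steps `z̄⁽ʳ⁺¹⁾ = z̄⁽ʳ⁾ - γ Ḡ⁽ʳ⁾`. The quadratic upper bound of the `L`-smooth `f` at `z̄⁽ʳ⁾` then
bounds `f(z̄⁽ʳ⁺¹⁾)` by `f(z̄⁽ʳ⁾) - γ ⟪∇f(z̄⁽ʳ⁾), Ḡ⁽ʳ⁾⟫ + (Lγ²/2) ‖Ḡ⁽ʳ⁾‖²`. Conditioning on round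
`r` replaces `Ḡ` by `h̄` in the inner product and splits `E‖Ḡ‖²` into `E‖h̄‖²` plus the variance
of the averaged noise, at most `σ²/N` because the noises are orthogonal. Comparing `∇f(z̄)` with
`∇f(x̄)` and `∇f(x̄)` with `h̄`, each an `L`-Lipschitz error, bounds `-⟪∇f(z̄), h̄⟫` pointwise,
and `Lγ ≤ 1/4` lets the resulting `-(3γ/8) ‖h̄‖²` absorb `(Lγ²/2) ‖h̄‖²`.
-/

open MeasureTheory
open scoped BigOperators

noncomputable section

/-- Problem data and standing assumptions (lower bound, mixing, smoothness) for
decentralized optimization over `N` nodes in `ℝ^d`. -/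
structure MTProblem (N d : ℕ) (Ω : Type) [mΩ : MeasurableSpace Ω] where
  /-- Probability measure driving the stochastic gradients. -/
  μ : Measure Ω
  prob : IsProbabilityMeasure μ
  fstar : ℝ
  L : ℝ
  σ : ℝ
  p : ℝ
  β : ℝ
  /-- Local objectives `f_i`. -/
  f : Fin N → EuclideanSpace ℝ (Fin d) → ℝ
  /-- Local gradients `∇f_i`. -/
  g : Fin N → EuclideanSpace ℝ (Fin d) → EuclideanSpace ℝ (Fin d)
  /-- Mixing matrix. -/
  W : Fin N → Fin N → ℝ
  /-- Common initial parameter. -/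
  x0 : EuclideanSpace ℝ (Fin d)
  hN : 0 < N
  hβ0 : 0 ≤ β
  hβ1 : β < 1
  hL : 0 < L
  hp0 : 0 < p
  hp1 : p ≤ 1
  hgrad : ∀ i v, HasGradientAt (f i) (g i v) v
  /-- Lower bound: `f⋆ ≤ f(x)` for all `x`. -/
  hlb : ∀ v, fstar ≤ (N : ℝ)⁻¹ * ∑ i, f i v
  /-- `L`-smoothness of each `f_i`. -/
  hsmooth : ∀ i v w, ‖g i v - g i w‖ ≤ L * ‖v - w‖
  hWsymm : ∀ i j, W i j = W j i
  hWrow : ∀ i, ∑ j, W i j = 1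
  hWcol : ∀ j, ∑ i, W i j = 1
  /-- Spectral gap: `‖XW − X̄‖_F² ≤ (1−p)‖X − X̄‖_F²`. -/
  hmix : ∀ X : Fin N → EuclideanSpace ℝ (Fin d),
    ∑ j, ‖(∑ i, W i j • X i) - (N : ℝ)⁻¹ • ∑ i, X i‖ ^ 2
      ≤ (1 - p) * ∑ j, ‖X j - (N : ℝ)⁻¹ • ∑ i, X i‖ ^ 2

namespace MTProblem

variable {N d : ℕ} {Ω : Type} [mΩ : MeasurableSpace Ω]

/-- Global objective `f = (1/N) ∑_i f_i`. -/
def F (P : MTProblem N d Ω) (v : EuclideanSpace ℝ (Fin d)) : ℝ :=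
  (N : ℝ)⁻¹ * ∑ i, P.f i v

/-- Gradient of the global objective, `∇f = (1/N) ∑_i ∇f_i`. -/
def gradF (P : MTProblem N d Ω) (v : EuclideanSpace ℝ (Fin d)) : EuclideanSpace ℝ (Fin d) :=
  (N : ℝ)⁻¹ • ∑ i, P.g i v

end MTProblem

/-- A run of the Momentum Tracking algorithm: trajectories `x, u, c`, realized
stochastic gradients `G r i = ∇F_i(x_i^{(r)}; ξ_i^{(r)})`, together with the update
rules, the standard initialization, and the stochastic-gradient assumptions
(unbiasedness, bounded variance, independence across nodes and rounds in the form
of orthogonality of the noises). -/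
structure MTRun {N d : ℕ} {Ω : Type} [mΩ : MeasurableSpace Ω] (P : MTProblem N d Ω) where
  /-- Step size. -/
  η : ℝ
  hη : 0 < η
  x : ℕ → Fin N → Ω → EuclideanSpace ℝ (Fin d)
  u : ℕ → Fin N → Ω → EuclideanSpace ℝ (Fin d)
  c : ℕ → Fin N → Ω → EuclideanSpace ℝ (Fin d)
  G : ℕ → Fin N → Ω → EuclideanSpace ℝ (Fin d)
  /-- Filtration of the information available at each round. -/
  ℱ : MeasureTheory.Filtration ℕ mΩ
  hx0 : ∀ i, x 0 i = fun _ => P.x0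
  hu0 : ∀ i ω, u 0 i ω = (1 - P.β)⁻¹ • (G 0 i ω - (N : ℝ)⁻¹ • ∑ j, G 0 j ω)
  hc0 : ∀ i, c 0 i = u 0 i
  hu : ∀ r i ω, u (r + 1) i ω = P.β • u r i ω + G r i ω
  hx : ∀ r i ω, x (r + 1) i ω
      = (∑ j, P.W i j • x r j ω) - η • (u (r + 1) i ω - c r i ω)
  hc : ∀ r i ω, c (r + 1) i ω
      = (∑ j, P.W i j • (c r j ω - u (r + 1) j ω)) + u (r + 1) i ω
  hmeas : ∀ r i, MemLp (G r i) 2 P.μ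
  hadapted_x : ∀ r i, StronglyMeasurable[ℱ r] (x r i)
  hadapted_G : ∀ r i, StronglyMeasurable[ℱ (r + 1)] (G r i)
  /-- Unbiasedness: `E[∇F_i(x_i^{(r)};ξ) | ℱ_r] = ∇f_i(x_i^{(r)})`. -/
  hunbiased : ∀ r i,
    MeasureTheory.condExp (ℱ r) P.μ (G r i) =ᵐ[P.μ] fun ω => P.g i (x r i ω)
  /-- Bounded variance. -/
  hvar : ∀ r i, ∫ ω, ‖G r i ω - P.g i (x r i ω)‖ ^ 2 ∂P.μ ≤ P.σ ^ 2
  /-- Independence across nodes and rounds (orthogonality of the noises). -/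
  horth : ∀ r s : ℕ, ∀ i j : Fin N, (r, i) ≠ (s, j) →
    ∫ ω, (inner ℝ (G r i ω - P.g i (x r i ω)) (G s j ω - P.g j (x s j ω)) : ℝ) ∂P.μ = 0

namespace MTRun

variable {N d : ℕ} {Ω : Type} [mΩ : MeasurableSpace Ω] {P : MTProblem N d Ω}

/-- Node-average of the parameters, `x̄^{(r)}`. -/
def xbar (S : MTRun P) (r : ℕ) (ω : Ω) : EuclideanSpace ℝ (Fin d) :=
  (N : ℝ)⁻¹ • ∑ i, S.x r i ω

/-- Node-average of the momenta, `ū^{(r)}`. -/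
def ubar (S : MTRun P) (r : ℕ) (ω : Ω) : EuclideanSpace ℝ (Fin d) :=
  (N : ℝ)⁻¹ • ∑ i, S.u r i ω

/-- Node-average of the correction variables, `c̄^{(r)}`. -/
def cbar (S : MTRun P) (r : ℕ) (ω : Ω) : EuclideanSpace ℝ (Fin d) :=
  (N : ℝ)⁻¹ • ∑ i, S.c r i ω

/-- Auxiliary average `z̄^{(r)}`. -/
def zbar (S : MTRun P) : ℕ → Ω → EuclideanSpace ℝ (Fin d)
  | 0 => S.xbar 0
  | r + 1 => fun ω =>
      (1 - P.β)⁻¹ • S.xbar (r + 1) ω - (P.β * (1 - P.β)⁻¹) • S.xbar r ω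

/-- Auxiliary sequence `d_i^{(r)}`. -/
def dseq (S : MTRun P) : ℕ → Fin N → Ω → EuclideanSpace ℝ (Fin d)
  | 0 => fun i ω => (1 - P.β)⁻¹ • (P.g i (S.xbar 0 ω) - P.gradF (S.xbar 0 ω))
  | r + 1 => fun i ω => P.β • dseq S r i ω + P.g i (S.xbar r ω)

/-- Auxiliary sequence `e_i^{(r)}`. -/
def eseq (S : MTRun P) : ℕ → Fin N → Ω → EuclideanSpace ℝ (Fin d)
  | 0 => fun _ _ => 0
  | r + 1 => fun i ω => P.β • eseq S r i ω + P.gradF (S.xbar r ω)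

/-- Node-average `d̄^{(r)}`. -/
def dbar (S : MTRun P) (r : ℕ) (ω : Ω) : EuclideanSpace ℝ (Fin d) :=
  (N : ℝ)⁻¹ • ∑ i, S.dseq r i ω

/-- Node-average `ē^{(r)}`. -/
def ebar (S : MTRun P) (r : ℕ) (ω : Ω) : EuclideanSpace ℝ (Fin d) :=
  (N : ℝ)⁻¹ • ∑ i, S.eseq r i ω

/-- Consensus distance `Ξ^{(r)} = (1/N) E‖X^{(r)} − X̄^{(r)}‖_F²`. -/
def Xi (S : MTRun P) (r : ℕ) : ℝ :=
  (N : ℝ)⁻¹ * ∫ ω, (∑ i, ‖S.x r i ω - S.xbar r ω‖ ^ 2) ∂P.μ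

/-- Tracking error `ℰ^{(r)} = (1/N) E‖D^{(r+1)} − C^{(r)} − E^{(r+1)}‖_F²`. -/
def EE (S : MTRun P) (r : ℕ) : ℝ :=
  (N : ℝ)⁻¹ *
    ∫ ω, (∑ i, ‖S.dseq (r + 1) i ω - S.c r i ω - S.eseq (r + 1) i ω‖ ^ 2) ∂P.μ

/-- Momentum drift `𝒟^{(r)} = (1/N) E‖D^{(r+1)} − D^{(r)} − E^{(r+1)} + E^{(r)}‖_F²`. -/
def DD (S : MTRun P) (r : ℕ) : ℝ :=
  (N : ℝ)⁻¹ *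
    ∫ ω, (∑ i,
      ‖S.dseq (r + 1) i ω - S.dseq r i ω - S.eseq (r + 1) i ω + S.eseq r i ω‖ ^ 2) ∂P.μ

end MTRun


open scoped InnerProductSpace

theorem sum_sub_inv_card_smul_sum {E ι : Type*} [AddCommGroup E] [Module ℝ E] [Fintype ι]
    (v : ι → E) :
    ∑ i, (v i - (Fintype.card ι : ℝ)⁻¹ • ∑ j, v j) = 0 := by
  rcases isEmpty_or_nonempty ι with hι | hι
  · simp
  · rw [Finset.sum_sub_distrib, Finset.sum_const, Finset.card_univ, ← Nat.cast_smul_eq_nsmul ℝ,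
      smul_smul, mul_inv_cancel₀ (Nat.cast_ne_zero.mpr Fintype.card_ne_zero), one_smul, sub_self]

theorem norm_inv_card_smul_sum_sq_le {E ι : Type*} [SeminormedAddCommGroup E] [NormedSpace ℝ E]
    [Fintype ι] (v : ι → E) :
    ‖(Fintype.card ι : ℝ)⁻¹ • ∑ i, v i‖ ^ 2 ≤ (Fintype.card ι : ℝ)⁻¹ * ∑ i, ‖v i‖ ^ 2 := by
  set n : ℝ := (Fintype.card ι : ℝ)
  have hn : 0 ≤ n := Nat.cast_nonneg _
  have hsum : ‖∑ i, v i‖ ^ 2 ≤ n * ∑ i, ‖v i‖ ^ 2 :=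
    (pow_le_pow_left₀ (norm_nonneg _) (norm_sum_le _ _) 2).trans
      (sq_sum_le_card_mul_sum_sq (s := Finset.univ))
  rw [norm_smul, mul_pow, Real.norm_eq_abs, sq_abs]
  rcases hn.eq_or_lt with h0 | hpos
  · simp [← h0]
  · calc n⁻¹ ^ 2 * ‖∑ i, v i‖ ^ 2 ≤ n⁻¹ ^ 2 * (n * ∑ i, ‖v i‖ ^ 2) := by gcongr
      _ = n⁻¹ * ∑ i, ‖v i‖ ^ 2 := by field_simp

section InnerProductSpace

variable {F : Type*} [NormedAddCommGroup F] [InnerProductSpace ℝ F]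

theorem neg_inner_le_norm_sub_sq_add (a b h : F) :
    -⟪b, h⟫_ℝ ≤ ‖b - a‖ ^ 2 + 3 / 4 * ‖a - h‖ ^ 2 - 1 / 4 * ‖a‖ ^ 2 - 3 / 8 * ‖h‖ ^ 2 := by
  have young : -⟪b - a, h⟫_ℝ ≤ ‖b - a‖ ^ 2 + 1 / 4 * ‖h‖ ^ 2 := by
    nlinarith [neg_abs_le ⟪b - a, h⟫_ℝ, abs_real_inner_le_norm (b - a) h,
      sq_nonneg (‖b - a‖ - ‖h‖ / 2)]
  have polar : ‖a - h‖ ^ 2 = ‖a‖ ^ 2 - 2 * ⟪a, h⟫_ℝ + ‖h‖ ^ 2 := norm_sub_sq_real a h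
  have hh : ‖h‖ ^ 2 ≤ 2 * ‖a‖ ^ 2 + 2 * ‖a - h‖ ^ 2 := by
    have htri : ‖h‖ ≤ ‖a‖ + ‖a - h‖ := by simpa using norm_sub_le a (a - h)
    nlinarith [mul_self_le_mul_self (norm_nonneg h) htri, sq_nonneg (‖a‖ - ‖a - h‖)]
  have split : ⟪b, h⟫_ℝ = ⟪b - a, h⟫_ℝ + ⟪a, h⟫_ℝ := by rw [← inner_add_left, sub_add_cancel]
  linarith

theorem quadratic_upper_bound_of_lipschitz_gradient [CompleteSpace F] {f : F → ℝ} {g : F → F}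
    {L : ℝ} (hf : ∀ v, HasGradientAt f (g v) v) (hg : ∀ v w, ‖g v - g w‖ ≤ L * ‖v - w‖) (x y : F) :
    f y ≤ f x + ⟪g x, y - x⟫_ℝ + L / 2 * ‖y - x‖ ^ 2 := by
  set v := y - x
  let φ : ℝ → ℝ := fun t => f (x + t • v) - t * ⟪g x, v⟫_ℝ - L / 2 * t ^ 2 * ‖v‖ ^ 2
  have hφ : ∀ t, HasDerivAt φ (⟪g (x + t • v), v⟫_ℝ - ⟪g x, v⟫_ℝ - L * t * ‖v‖ ^ 2) t := by
    intro t
    have hline : HasDerivAt (fun s : ℝ => x + s • v) v t := by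
      simpa using ((hasDerivAt_id t).smul_const v).const_add x
    have hcomp := (hf (x + t • v)).hasFDerivAt.comp_hasDerivAt t hline
    simp only [InnerProductSpace.toDual_apply_apply] at hcomp
    refine ((hcomp.sub ((hasDerivAt_id t).mul_const ⟪g x, v⟫_ℝ)).sub
      (((hasDerivAt_pow 2 t).const_mul (L / 2)).mul_const (‖v‖ ^ 2))).congr_deriv ?_
    simp only [Nat.cast_ofNat]
    ring
  have hφ' : ∀ t ∈ Set.Ioi (0 : ℝ),
      ⟪g (x + t • v), v⟫_ℝ - ⟪g x, v⟫_ℝ - L * t * ‖v‖ ^ 2 ≤ 0 := by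
    intro t ht
    have hLip : ‖g (x + t • v) - g x‖ ≤ L * (t * ‖v‖) := by
      simpa [norm_smul, abs_of_pos (Set.mem_Ioi.mp ht)] using hg (x + t • v) x
    rw [← inner_sub_left]
    nlinarith [real_inner_le_norm (g (x + t • v) - g x) v, norm_nonneg v]
  have hanti : AntitoneOn φ (Set.Icc 0 1) :=
    antitoneOn_of_hasDerivWithinAt_nonpos (convex_Icc 0 1)
      (HasDerivAt.continuousOn fun t _ => hφ t)
      (fun t _ => (hφ t).hasDerivWithinAt)
      (fun t ht => hφ' t (by simp_all))
  have h01 : φ 1 ≤ φ 0 := hanti (by simp) (by simp) zero_le_one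
  simp only [φ, zero_smul, add_zero, one_smul] at h01
  rw [show x + v = y from add_sub_cancel x y] at h01
  linarith

end InnerProductSpace

section Probability

variable {Ω : Type*} {m mΩ : MeasurableSpace Ω} {μ : Measure Ω} {F : Type*} [NormedAddCommGroup F]

theorem MeasureTheory.MemLp.integrable_norm_sq {f : Ω → F} (hf : MemLp f 2 μ) :
    Integrable (fun ω => ‖f ω‖ ^ 2) μ :=
  (memLp_two_iff_integrable_sq_norm hf.1).1 hf

theorem LipschitzWith.comp_memLp_of_isFiniteMeasure [IsFiniteMeasure μ] {E : Type*}
    [NormedAddCommGroup E] {p : ENNReal} {K : NNReal} {g : E → F} (hg : LipschitzWith K g)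
    {f : Ω → E} (hf : MemLp f p μ) : MemLp (fun ω => g (f ω)) p μ := by
  refine ((memLp_const ‖g 0‖).add (hf.norm.const_mul K)).mono'
    (hg.continuous.comp_aestronglyMeasurable hf.1) (ae_of_all _ fun ω => ?_)
  have := hg.dist_le_mul (f ω) 0
  rw [dist_eq_norm, dist_eq_norm, sub_zero] at this
  simpa using (norm_le_norm_add_norm_sub' (g (f ω)) (g 0)).trans (by linarith)

variable [InnerProductSpace ℝ F]

theorem MeasureTheory.MemLp.integrable_inner {f g : Ω → F} (hf : MemLp f 2 μ)
    (hg : MemLp g 2 μ) : Integrable (fun ω => ⟪f ω, g ω⟫_ℝ) μ :=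
  memLp_one_iff_integrable.1 ((innerSL ℝ).memLp_of_bilin 1 hf hg)

theorem integral_norm_sum_sq_eq_sum_of_orthogonal {ι : Type*} (s : Finset ι) {Z : ι → Ω → F}
    (hZ : ∀ i, MemLp (Z i) 2 μ)
    (horth : ∀ i ∈ s, ∀ j ∈ s, i ≠ j → ∫ ω, ⟪Z i ω, Z j ω⟫_ℝ ∂μ = 0) :
    ∫ ω, ‖∑ i ∈ s, Z i ω‖ ^ 2 ∂μ = ∑ i ∈ s, ∫ ω, ‖Z i ω‖ ^ 2 ∂μ := by
  have hexpand : ∀ ω, ‖∑ i ∈ s, Z i ω‖ ^ 2 = ∑ i ∈ s, ∑ j ∈ s, ⟪Z i ω, Z j ω⟫_ℝ := by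
    intro ω
    rw [← real_inner_self_eq_norm_sq, sum_inner]
    simp_rw [inner_sum]
  have hint : ∀ i j, Integrable (fun ω => ⟪Z i ω, Z j ω⟫_ℝ) μ := fun i j =>
    (hZ i).integrable_inner (hZ j)
  simp only [hexpand]
  rw [integral_finsetSum _ fun i _ => integrable_finsetSum _ fun j _ => hint i j]
  refine Finset.sum_congr rfl fun i hi => ?_
  rw [integral_finsetSum _ fun j _ => hint i j,
    Finset.sum_eq_single_of_mem i hi fun j hj hji => horth i hi j hj (Ne.symm hji)]
  simp only [real_inner_self_eq_norm_sq]

variable [CompleteSpace F] [IsFiniteMeasure μ]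

theorem integral_inner_eq_of_condExp_ae_eq (hm : m ≤ mΩ) {X Y Z : Ω → F}
    (hY : StronglyMeasurable[m] Y) (hY2 : MemLp Y 2 μ) (hZ2 : MemLp Z 2 μ)
    (hZ : μ[Z | m] =ᵐ[μ] X) :
    ∫ ω, ⟪Y ω, Z ω⟫_ℝ ∂μ = ∫ ω, ⟪Y ω, X ω⟫_ℝ ∂μ := by
  have hpull := condExp_bilin_of_stronglyMeasurable_left (innerSL ℝ) hY
    (hY2.integrable_inner hZ2) (hZ2.integrable one_le_two)
  rw [← integral_condExp hm]
  refine integral_congr_ae ?_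
  filter_upwards [hpull, hZ] with ω hpullω hZω
  rw [hZω] at hpullω
  exact hpullω

theorem integral_norm_sq_eq_add_of_condExp_ae_eq (hm : m ≤ mΩ) {X Z : Ω → F}
    (hX : StronglyMeasurable[m] X) (hX2 : MemLp X 2 μ) (hZ2 : MemLp Z 2 μ)
    (hZ : μ[Z | m] =ᵐ[μ] X) :
    ∫ ω, ‖Z ω‖ ^ 2 ∂μ = ∫ ω, ‖X ω‖ ^ 2 ∂μ + ∫ ω, ‖Z ω - X ω‖ ^ 2 ∂μ := by
  have hcross : ∫ ω, ⟪X ω, Z ω - X ω⟫_ℝ ∂μ = 0 := by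
    simp only [inner_sub_right]
    rw [integral_sub (hX2.integrable_inner hZ2) (hX2.integrable_inner hX2),
      integral_inner_eq_of_condExp_ae_eq hm hX hX2 hZ2 hZ, sub_self]
  have hsplit : ∀ ω, ‖Z ω‖ ^ 2 = ‖X ω‖ ^ 2 + 2 * ⟪X ω, Z ω - X ω⟫_ℝ + ‖Z ω - X ω‖ ^ 2 := by
    intro ω
    rw [← norm_add_sq_real, add_sub_cancel]
  have hZX : MemLp (fun ω => Z ω - X ω) 2 μ := hZ2.sub hX2
  have hcross_int : Integrable (fun ω => 2 * ⟪X ω, Z ω - X ω⟫_ℝ) μ :=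
    (hX2.integrable_inner hZX).const_mul 2
  simp only [hsplit]
  rw [integral_add, integral_add hX2.integrable_norm_sq hcross_int, integral_const_mul, hcross,
    mul_zero, add_zero]
  exacts [hX2.integrable_norm_sq.add hcross_int, hZX.integrable_norm_sq]

end Probability

namespace MTProblem

variable {N d : ℕ} {Ω : Type} [MeasurableSpace Ω] (P : MTProblem N d Ω)

theorem lipschitzWith_g (i : Fin N) : LipschitzWith ⟨P.L, P.hL.le⟩ (P.g i) :=
  LipschitzWith.of_dist_le_mul fun v w => by
    rw [dist_eq_norm, dist_eq_norm]
    exact P.hsmooth i v w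

theorem norm_gradF_sub_smul_sum_g_sq_le (v : EuclideanSpace ℝ (Fin d))
    (x : Fin N → EuclideanSpace ℝ (Fin d)) :
    ‖P.gradF v - (N : ℝ)⁻¹ • ∑ i, P.g i (x i)‖ ^ 2
      ≤ P.L ^ 2 * ((N : ℝ)⁻¹ * ∑ i, ‖x i - v‖ ^ 2) := by
  have havg := norm_inv_card_smul_sum_sq_le fun i => P.g i v - P.g i (x i)
  simp only [Fintype.card_fin, Finset.sum_sub_distrib, smul_sub] at havg
  calc _ ≤ _ := havg
    _ ≤ (N : ℝ)⁻¹ * ∑ i, (P.L * ‖x i - v‖) ^ 2 := by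
      gcongr with i
      rw [norm_sub_rev (x i)]
      exact P.hsmooth i v (x i)
    _ = P.L ^ 2 * ((N : ℝ)⁻¹ * ∑ i, ‖x i - v‖ ^ 2) := by
      simp only [mul_pow, ← Finset.mul_sum]
      ring

theorem norm_gradF_sub_le (v w : EuclideanSpace ℝ (Fin d)) :
    ‖P.gradF v - P.gradF w‖ ≤ P.L * ‖v - w‖ := by
  have hN : (N : ℝ) ≠ 0 := Nat.cast_ne_zero.mpr P.hN.ne'
  have hsq := P.norm_gradF_sub_smul_sum_g_sq_le v fun _ => w
  rw [Finset.sum_const, Finset.card_univ, Fintype.card_fin, nsmul_eq_mul, inv_mul_cancel_left₀ hN,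
    norm_sub_rev w, ← mul_pow] at hsq
  exact (pow_le_pow_iff_left₀ (norm_nonneg _) (mul_nonneg P.hL.le (norm_nonneg _))
    two_ne_zero).1 hsq

theorem lipschitzWith_gradF : LipschitzWith ⟨P.L, P.hL.le⟩ P.gradF :=
  LipschitzWith.of_dist_le_mul fun v w => by
    rw [dist_eq_norm, dist_eq_norm]
    exact P.norm_gradF_sub_le v w

theorem hasGradientAt_F (v : EuclideanSpace ℝ (Fin d)) : HasGradientAt P.F (P.gradF v) v := by
  rw [hasGradientAt_iff_hasFDerivAt]
  have hsum := (HasFDerivAt.fun_sum (u := Finset.univ) fun i _ =>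
    (P.hgrad i v).hasFDerivAt).const_mul (N : ℝ)⁻¹
  rwa [gradF, map_smul, map_sum]

theorem differentiable_F : Differentiable ℝ P.F :=
  fun v => (P.hasGradientAt_F v).differentiableAt

theorem F_le_add_inner_add (x y : EuclideanSpace ℝ (Fin d)) :
    P.F y ≤ P.F x + ⟪P.gradF x, y - x⟫_ℝ + P.L / 2 * ‖y - x‖ ^ 2 :=
  quadratic_upper_bound_of_lipschitz_gradient P.hasGradientAt_F P.norm_gradF_sub_le x y

theorem sum_sum_W_smul (v : Fin N → EuclideanSpace ℝ (Fin d)) :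
    ∑ i, ∑ j, P.W i j • v j = ∑ j, v j := by
  rw [Finset.sum_comm]
  exact Finset.sum_congr rfl fun j _ => by rw [← Finset.sum_smul, P.hWcol j, one_smul]

end MTProblem

namespace MTRun

variable {N d : ℕ} {Ω : Type} [MeasurableSpace Ω] {P : MTProblem N d Ω} (S : MTRun P)

def Gbar (r : ℕ) (ω : Ω) : EuclideanSpace ℝ (Fin d) :=
  (N : ℝ)⁻¹ • ∑ i, S.G r i ω

def hbar (r : ℕ) (ω : Ω) : EuclideanSpace ℝ (Fin d) :=
  (N : ℝ)⁻¹ • ∑ i, P.g i (S.x r i ω)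

theorem ubar_zero (ω : Ω) : S.ubar 0 ω = 0 := by
  have hdev := sum_sub_inv_card_smul_sum fun j => S.G 0 j ω
  rw [Fintype.card_fin] at hdev
  simp only [ubar, S.hu0, ← Finset.smul_sum, hdev, smul_zero]

theorem cbar_succ (r : ℕ) (ω : Ω) : S.cbar (r + 1) ω = S.cbar r ω := by
  simp only [cbar, S.hc]
  rw [Finset.sum_add_distrib, P.sum_sum_W_smul, ← Finset.sum_add_distrib]
  simp only [sub_add_cancel]

theorem cbar_eq_zero (r : ℕ) (ω : Ω) : S.cbar r ω = 0 := by
  induction r with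
  | zero => simpa only [cbar, ubar, S.hc0] using S.ubar_zero ω
  | succ r ih => rw [S.cbar_succ, ih]

theorem ubar_succ (r : ℕ) (ω : Ω) : S.ubar (r + 1) ω = P.β • S.ubar r ω + S.Gbar r ω := by
  simp only [ubar, Gbar, S.hu, Finset.sum_add_distrib, smul_add, ← Finset.smul_sum, smul_comm P.β]

theorem xbar_succ (r : ℕ) (ω : Ω) : S.xbar (r + 1) ω = S.xbar r ω - S.η • S.ubar (r + 1) ω := by
  have hmean : S.xbar (r + 1) ω = S.xbar r ω - S.η • (S.ubar (r + 1) ω - S.cbar r ω) := by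
    simp only [xbar, ubar, cbar, S.hx, Finset.sum_sub_distrib, P.sum_sum_W_smul,
      ← Finset.smul_sum, smul_sub, smul_comm S.η]
  rw [hmean, S.cbar_eq_zero, sub_zero]

theorem zbar_succ (r : ℕ) (ω : Ω) :
    S.zbar (r + 1) ω = S.zbar r ω - (S.η / (1 - P.β)) • S.Gbar r ω := by
  have hβ : 1 - P.β ≠ 0 := (sub_pos.mpr P.hβ1).ne'
  cases r with
  | zero =>
    simp only [zbar, S.xbar_succ, S.ubar_succ, S.ubar_zero, smul_zero, zero_add]
    match_scalars <;> field_simp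
  | succ r =>
    have hprev : S.xbar r ω = S.xbar (r + 1) ω + S.η • S.ubar (r + 1) ω := by
      rw [S.xbar_succ r ω, sub_add_cancel]
    simp only [zbar]
    rw [S.xbar_succ (r + 1), S.ubar_succ (r + 1), hprev]
    match_scalars <;> field_simp

theorem memLp_x_u_c (r : ℕ) :
    (∀ i, MemLp (S.x r i) 2 P.μ) ∧ (∀ i, MemLp (S.u r i) 2 P.μ) ∧
      (∀ i, MemLp (S.c r i) 2 P.μ) := by
  have := P.prob
  induction r with
  | zero =>
    have hu : ∀ i, MemLp (S.u 0 i) 2 P.μ := fun i => by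
      rw [show S.u 0 i = _ from funext (S.hu0 i)]
      exact ((S.hmeas 0 i).sub ((memLp_finsetSum Finset.univ fun j _ => S.hmeas 0 j).const_smul
        (N : ℝ)⁻¹)).const_smul (1 - P.β)⁻¹
    exact ⟨fun i => S.hx0 i ▸ memLp_const _, hu, fun i => S.hc0 i ▸ hu i⟩
  | succ r ih =>
    obtain ⟨hx, hu, hc⟩ := ih
    have hu' : ∀ i, MemLp (S.u (r + 1) i) 2 P.μ := fun i => by
      rw [show S.u (r + 1) i = _ from funext (S.hu r i)]
      exact ((hu i).const_smul P.β).add (S.hmeas r i)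
    refine ⟨fun i => ?_, hu', fun i => ?_⟩
    · rw [show S.x (r + 1) i = _ from funext (S.hx r i)]
      exact (memLp_finsetSum Finset.univ fun j _ => (hx j).const_smul (P.W i j)).sub
        (((hu' i).sub (hc i)).const_smul S.η)
    · rw [show S.c (r + 1) i = _ from funext (S.hc r i)]
      exact (memLp_finsetSum Finset.univ fun j _ => ((hc j).sub (hu' j)).const_smul (P.W i j)).add
        (hu' i)

theorem memLp_x (r : ℕ) (i : Fin N) : MemLp (S.x r i) 2 P.μ :=
  (S.memLp_x_u_c r).1 i

theorem memLp_xbar (r : ℕ) : MemLp (S.xbar r) 2 P.μ :=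
  (memLp_finsetSum Finset.univ fun i _ => S.memLp_x r i).const_smul (N : ℝ)⁻¹

theorem stronglyMeasurable_xbar (r : ℕ) : StronglyMeasurable[S.ℱ r] (S.xbar r) :=
  (Finset.stronglyMeasurable_fun_sum Finset.univ fun i _ => S.hadapted_x r i).const_smul
    (N : ℝ)⁻¹

theorem memLp_zbar (r : ℕ) : MemLp (S.zbar r) 2 P.μ := by
  cases r with
  | zero => exact S.memLp_xbar 0
  | succ r =>
    exact ((S.memLp_xbar (r + 1)).const_smul (1 - P.β)⁻¹).sub
      ((S.memLp_xbar r).const_smul (P.β * (1 - P.β)⁻¹))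

theorem stronglyMeasurable_zbar (r : ℕ) : StronglyMeasurable[S.ℱ r] (S.zbar r) := by
  cases r with
  | zero => exact S.stronglyMeasurable_xbar 0
  | succ r =>
    exact ((S.stronglyMeasurable_xbar (r + 1)).const_smul (1 - P.β)⁻¹).sub
      (((S.stronglyMeasurable_xbar r).mono (S.ℱ.mono r.le_succ)).const_smul (P.β * (1 - P.β)⁻¹))

theorem memLp_hbar (r : ℕ) : MemLp (S.hbar r) 2 P.μ := by
  have := P.prob
  exact (memLp_finsetSum Finset.univ fun i _ =>
    (P.lipschitzWith_g i).comp_memLp_of_isFiniteMeasure (S.memLp_x r i)).const_smul (N : ℝ)⁻¹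

theorem stronglyMeasurable_hbar (r : ℕ) : StronglyMeasurable[S.ℱ r] (S.hbar r) :=
  (Finset.stronglyMeasurable_fun_sum Finset.univ fun i _ =>
    (P.lipschitzWith_g i).continuous.comp_stronglyMeasurable (S.hadapted_x r i)).const_smul
    (N : ℝ)⁻¹

theorem memLp_Gbar (r : ℕ) : MemLp (S.Gbar r) 2 P.μ :=
  (memLp_finsetSum Finset.univ fun i _ => S.hmeas r i).const_smul (N : ℝ)⁻¹

theorem integrable_F_zbar (r : ℕ) : Integrable (fun ω => P.F (S.zbar r ω)) P.μ := by
  have := P.prob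
  have hz := S.memLp_zbar r
  refine integrable_of_le_of_le (P.differentiable_F.continuous.comp_aestronglyMeasurable hz.1)
    (ae_of_all _ fun ω => P.hlb (S.zbar r ω)) (ae_of_all _ fun ω => ?_) (integrable_const P.fstar)
    (((integrable_const (P.F 0)).add ((hz.integrable one_le_two).const_inner (P.gradF 0))).add
      (hz.integrable_norm_sq.const_mul (P.L / 2)))
  simpa using P.F_le_add_inner_add 0 (S.zbar r ω)

theorem Xi_nonneg (r : ℕ) : 0 ≤ S.Xi r :=
  mul_nonneg (inv_nonneg.mpr (Nat.cast_nonneg N))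
    (integral_nonneg fun _ => Finset.sum_nonneg fun _ _ => sq_nonneg _)

theorem condExp_Gbar (r : ℕ) : P.μ[S.Gbar r | S.ℱ r] =ᵐ[P.μ] S.hbar r := by
  have := P.prob
  have hGbar : S.Gbar r = (N : ℝ)⁻¹ • ∑ i, S.G r i := by
    ext1 ω
    simp only [Gbar, Pi.smul_apply, Finset.sum_apply]
  rw [hGbar]
  filter_upwards [condExp_smul (N : ℝ)⁻¹ (∑ i, S.G r i) (S.ℱ r),
    condExp_finsetSum (fun i _ => (S.hmeas r i).integrable one_le_two) (S.ℱ r),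
    ae_all_iff.2 fun i => S.hunbiased r i] with ω hsmul hsum hunbiased
  rw [hsmul, Pi.smul_apply, hsum, Finset.sum_apply]
  simp only [hunbiased]
  rfl

theorem integral_norm_Gbar_sub_hbar_sq_le (r : ℕ) :
    ∫ ω, ‖S.Gbar r ω - S.hbar r ω‖ ^ 2 ∂P.μ ≤ P.σ ^ 2 / N := by
  have := P.prob
  have hN : (N : ℝ) ≠ 0 := Nat.cast_ne_zero.mpr P.hN.ne'
  let ξ : Fin N → Ω → EuclideanSpace ℝ (Fin d) := fun i ω => S.G r i ω - P.g i (S.x r i ω)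
  have hξ : ∀ i, MemLp (ξ i) 2 P.μ := fun i =>
    (S.hmeas r i).sub ((P.lipschitzWith_g i).comp_memLp_of_isFiniteMeasure (S.memLp_x r i))
  have hmean : ∀ ω, ‖S.Gbar r ω - S.hbar r ω‖ ^ 2 = ((N : ℝ)⁻¹) ^ 2 * ‖∑ i, ξ i ω‖ ^ 2 := by
    intro ω
    rw [Gbar, hbar, ← smul_sub, ← Finset.sum_sub_distrib, norm_smul, mul_pow, Real.norm_eq_abs,
      sq_abs]
  have hpythagoras := integral_norm_sum_sq_eq_sum_of_orthogonal Finset.univ hξ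
    fun i _ j _ hij => S.horth r r i j (by simp [hij])
  simp only [hmean, integral_const_mul, hpythagoras]
  calc ((N : ℝ)⁻¹) ^ 2 * ∑ i, ∫ ω, ‖ξ i ω‖ ^ 2 ∂P.μ
      ≤ ((N : ℝ)⁻¹) ^ 2 * ∑ _i : Fin N, P.σ ^ 2 := by
        gcongr with i
        exact S.hvar r i
    _ = P.σ ^ 2 / N := by
        rw [Finset.sum_const, Finset.card_univ, Fintype.card_fin, nsmul_eq_mul]
        field_simp

theorem integral_inner_gradF_zbar_Gbar (r : ℕ) :
    ∫ ω, ⟪P.gradF (S.zbar r ω), S.Gbar r ω⟫_ℝ ∂P.μ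
      = ∫ ω, ⟪P.gradF (S.zbar r ω), S.hbar r ω⟫_ℝ ∂P.μ := by
  have := P.prob
  exact integral_inner_eq_of_condExp_ae_eq (S.ℱ.le r)
    (P.lipschitzWith_gradF.continuous.comp_stronglyMeasurable (S.stronglyMeasurable_zbar r))
    (P.lipschitzWith_gradF.comp_memLp_of_isFiniteMeasure (S.memLp_zbar r)) (S.memLp_Gbar r)
    (S.condExp_Gbar r)

theorem integral_norm_Gbar_sq_le (r : ℕ) :
    ∫ ω, ‖S.Gbar r ω‖ ^ 2 ∂P.μ ≤ ∫ ω, ‖S.hbar r ω‖ ^ 2 ∂P.μ + P.σ ^ 2 / N := by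
  have := P.prob
  rw [integral_norm_sq_eq_add_of_condExp_ae_eq (S.ℱ.le r) (S.stronglyMeasurable_hbar r)
    (S.memLp_hbar r) (S.memLp_Gbar r) (S.condExp_Gbar r)]
  exact add_le_add le_rfl (S.integral_norm_Gbar_sub_hbar_sq_le r)

theorem integral_F_zbar_succ_le (r : ℕ) :
    ∫ ω, P.F (S.zbar (r + 1) ω) ∂P.μ
      ≤ ∫ ω, P.F (S.zbar r ω) ∂P.μ
        - S.η / (1 - P.β) * ∫ ω, ⟪P.gradF (S.zbar r ω), S.hbar r ω⟫_ℝ ∂P.μ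
        + P.L / 2 * (S.η / (1 - P.β)) ^ 2 * (∫ ω, ‖S.hbar r ω‖ ^ 2 ∂P.μ + P.σ ^ 2 / N) := by
  have := P.prob
  set γ := S.η / (1 - P.β)
  have hpointwise : ∀ ω, P.F (S.zbar (r + 1) ω) ≤ P.F (S.zbar r ω)
      + -γ * ⟪P.gradF (S.zbar r ω), S.Gbar r ω⟫_ℝ + P.L / 2 * γ ^ 2 * ‖S.Gbar r ω‖ ^ 2 := by
    intro ω
    have h := P.F_le_add_inner_add (S.zbar r ω) (S.zbar (r + 1) ω)
    rw [S.zbar_succ] at h ⊢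
    rwa [sub_sub_cancel_left, inner_neg_right, real_inner_smul_right, norm_neg, norm_smul,
      mul_pow, Real.norm_eq_abs, sq_abs, neg_mul_eq_neg_mul, ← mul_assoc] at h
  have hYG : Integrable (fun ω => ⟪P.gradF (S.zbar r ω), S.Gbar r ω⟫_ℝ) P.μ :=
    (P.lipschitzWith_gradF.comp_memLp_of_isFiniteMeasure (S.memLp_zbar r)).integrable_inner
      (S.memLp_Gbar r)
  have hGG := (S.memLp_Gbar r).integrable_norm_sq
  have hF := S.integrable_F_zbar r
  have hintegrated := integral_mono (S.integrable_F_zbar (r + 1)) (by fun_prop) hpointwise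
  rw [integral_add (by fun_prop) (by fun_prop), integral_add hF (by fun_prop), integral_const_mul,
    integral_const_mul, S.integral_inner_gradF_zbar_Gbar] at hintegrated
  have hγ : 0 ≤ P.L / 2 * γ ^ 2 := by have := P.hL; positivity
  linarith [mul_le_mul_of_nonneg_left (S.integral_norm_Gbar_sq_le r) hγ]

theorem neg_integral_inner_gradF_zbar_hbar_le (r : ℕ) :
    -∫ ω, ⟪P.gradF (S.zbar r ω), S.hbar r ω⟫_ℝ ∂P.μ
      ≤ P.L ^ 2 * ∫ ω, ‖S.xbar r ω - S.zbar r ω‖ ^ 2 ∂P.μ + 3 / 4 * P.L ^ 2 * S.Xi r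
        - 1 / 4 * ∫ ω, ‖P.gradF (S.xbar r ω)‖ ^ 2 ∂P.μ
        - 3 / 8 * ∫ ω, ‖S.hbar r ω‖ ^ 2 ∂P.μ := by
  have := P.prob
  have hpointwise : ∀ ω, -⟪P.gradF (S.zbar r ω), S.hbar r ω⟫_ℝ
      ≤ P.L ^ 2 * ‖S.xbar r ω - S.zbar r ω‖ ^ 2
        + 3 / 4 * P.L ^ 2 * ((N : ℝ)⁻¹ * ∑ i, ‖S.x r i ω - S.xbar r ω‖ ^ 2)
        - 1 / 4 * ‖P.gradF (S.xbar r ω)‖ ^ 2 - 3 / 8 * ‖S.hbar r ω‖ ^ 2 := by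
    intro ω
    have hz : ‖P.gradF (S.zbar r ω) - P.gradF (S.xbar r ω)‖ ^ 2
        ≤ P.L ^ 2 * ‖S.xbar r ω - S.zbar r ω‖ ^ 2 := by
      rw [← mul_pow, norm_sub_rev (S.xbar r ω)]
      exact pow_le_pow_left₀ (norm_nonneg _) (P.norm_gradF_sub_le _ _) 2
    have hx : ‖P.gradF (S.xbar r ω) - S.hbar r ω‖ ^ 2
        ≤ P.L ^ 2 * ((N : ℝ)⁻¹ * ∑ i, ‖S.x r i ω - S.xbar r ω‖ ^ 2) :=
      P.norm_gradF_sub_smul_sum_g_sq_le _ _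
    linarith [neg_inner_le_norm_sub_sq_add (P.gradF (S.xbar r ω)) (P.gradF (S.zbar r ω))
      (S.hbar r ω)]
  have hYh : Integrable (fun ω => ⟪P.gradF (S.zbar r ω), S.hbar r ω⟫_ℝ) P.μ :=
    (P.lipschitzWith_gradF.comp_memLp_of_isFiniteMeasure (S.memLp_zbar r)).integrable_inner
      (S.memLp_hbar r)
  have hZ := ((S.memLp_xbar r).sub (S.memLp_zbar r)).integrable_norm_sq
  have hΞ : Integrable (fun ω => ∑ i, ‖S.x r i ω - S.xbar r ω‖ ^ 2) P.μ :=
    integrable_finsetSum _ fun i _ => ((S.memLp_x r i).sub (S.memLp_xbar r)).integrable_norm_sq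
  have hA :=
    (P.lipschitzWith_gradF.comp_memLp_of_isFiniteMeasure (S.memLp_xbar r)).integrable_norm_sq
  have hH := (S.memLp_hbar r).integrable_norm_sq
  have hintegrated := integral_mono (by fun_prop) (by fun_prop) hpointwise
  rw [integral_neg, integral_sub (by fun_prop) (by fun_prop),
    integral_sub (by fun_prop) (by fun_prop), integral_add (by fun_prop) (by fun_prop)]
    at hintegrated
  simpa only [integral_const_mul, Xi, mul_assoc] using hintegrated

end MTRun

/-- **Descent Lemma**: if `η ≤ (1−β)/(4L)`, then for every round `r ≥ 0`,
`E f(z̄^{(r+1)}) ≤ E f(z̄^{(r)}) + (L²η/(1−β)) E‖x̄^{(r)} − z̄^{(r)}‖² + (L²η/(1−β)) Ξ^{(r)}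
  − (η/(4(1−β))) E‖(1/N)∑ᵢ∇f_i(x_i^{(r)})‖² − (η/(4(1−β))) E‖∇f(x̄^{(r)})‖²
  + Lσ²η²/(2N(1−β)²)`. -/
theorem descent_lemma
    (N d : ℕ) (Ω : Type) [mΩ : MeasurableSpace Ω]
    (P : MTProblem N d Ω) (S : MTRun P)
    (hstep : S.η ≤ (1 - P.β) / (4 * P.L)) :
    ∀ r : ℕ,
      ∫ ω, P.F (S.zbar (r + 1) ω) ∂P.μ ≤
        ∫ ω, P.F (S.zbar r ω) ∂P.μ
          + P.L ^ 2 * S.η / (1 - P.β) * ∫ ω, ‖S.xbar r ω - S.zbar r ω‖ ^ 2 ∂P.μ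
          + P.L ^ 2 * S.η / (1 - P.β) * S.Xi r
          - S.η / (4 * (1 - P.β)) *
              ∫ ω, ‖(N : ℝ)⁻¹ • ∑ i, P.g i (S.x r i ω)‖ ^ 2 ∂P.μ
          - S.η / (4 * (1 - P.β)) * ∫ ω, ‖P.gradF (S.xbar r ω)‖ ^ 2 ∂P.μ
          + P.L * P.σ ^ 2 * S.η ^ 2 / (2 * (N : ℝ) * (1 - P.β) ^ 2) := by
  intro r
  have hβ : 0 < 1 - P.β := sub_pos.mpr P.hβ1
  have hdescent := S.integral_F_zbar_succ_le r
  have hinner := S.neg_integral_inner_gradF_zbar_hbar_le r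
  simp only [MTRun.hbar] at hdescent hinner
  set γ := S.η / (1 - P.β) with hγ
  have hγ_pos : 0 < γ := div_pos S.hη hβ
  have hLγ : P.L * γ ≤ 1 / 4 := by
    rw [le_div_iff₀ (by linarith [P.hL])] at hstep
    rw [hγ, ← mul_div_assoc, div_le_iff₀ hβ]
    linarith
  have hH : 0 ≤ ∫ ω, ‖(N : ℝ)⁻¹ • ∑ i, P.g i (S.x r i ω)‖ ^ 2 ∂P.μ :=
    integral_nonneg fun ω => sq_nonneg _
  have hcoeff₁ : P.L ^ 2 * S.η / (1 - P.β) = P.L ^ 2 * γ := mul_div_assoc _ _ _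
  have hcoeff₂ : S.η / (4 * (1 - P.β)) = γ / 4 := by rw [hγ, div_div, mul_comm 4]
  have hcoeff₃ : P.L * P.σ ^ 2 * S.η ^ 2 / (2 * N * (1 - P.β) ^ 2)
      = P.L / 2 * γ ^ 2 * (P.σ ^ 2 / N) := by
    rw [hγ]
    field_simp
  rw [hcoeff₁, hcoeff₂, hcoeff₃]
  linarith [mul_le_mul_of_nonneg_left hinner hγ_pos.le,
    mul_le_mul_of_nonneg_right hLγ (mul_nonneg hγ_pos.le hH),
    mul_nonneg (mul_nonneg hγ_pos.le (sq_nonneg P.L)) (S.Xi_nonneg r)]
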